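/- arXiv:2007.00171 — 4 statements merged into one kernel-verified Lean document; each statement's English description precedes it below -/
import Mathlib

section
/- Let G = (V, E) be a finite undirected graph. Construct a 3-layer digraph Ĝ as follows: layer-3 vertices are the edges of G, layer-2 vertices are the vertices of G (plus a duplicate v_i' for each self-loop (v_i, v_i)), and for each edge e = {v_i, v_j} of G there are directed edges (e, v_i) and (e, v_j) (for a self-loop, edges (e, v_i) and (e, v_i')), plus a self-loop on each layer-3 vertex e. Then a set Λ of layer-2 vertices with S ∩ V' = ∅ has the property that, after removing all edges into controlled nodes Λ ∪ {layer-3 vertices}, every layer-3 vertex has out-degree at most 1, if and only if Λ ∩ V is a vertex cover of G. -/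
namespace Stmt10

variable {V : Type*}

/-- `e` is an edge of the undirected graph `G` (edges are unordered pairs). -/
def IsEdge (G : V → V → Prop) (e : Sym2 V) : Prop := ∃ i j, G i j ∧ e = s(i, j)

/-- Vertices of the 3-layer digraph: layer-3 vertices are the (potential) edges of `G`,
layer-2 vertices are the vertices of `G` (`Sum.inr (Sum.inl v)`) together with a
duplicate `v'` for each vertex (`Sum.inr (Sum.inr v)`, used only for self-loops). -/
abbrev Node (V : Type*) := Sym2 V ⊕ (V ⊕ V)

/-- Edges of the 3-layer digraph `Ĝ`: each layer-3 vertex `e` carries a self-loop; for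
each edge `e = {v_i, v_j}` of `G` there are directed edges `(e, v_i)` and `(e, v_j)`,
and for a self-loop `e = {v_i, v_i}` additionally the edge `(e, v_i')`. -/
def D (G : V → V → Prop) : Node V → Node V → Prop
  | Sum.inl e, Sum.inl e' => e = e' ∧ IsEdge G e
  | Sum.inl e, Sum.inr (Sum.inl v) => IsEdge G e ∧ v ∈ e
  | Sum.inl e, Sum.inr (Sum.inr v) => IsEdge G e ∧ e = s(v, v)
  | _, _ => False

/-- The controlled nodes: all layer-3 vertices together with the layer-2 originals of
the chosen set `Λ ⊆ V` (so `Λ ∩ V' = ∅`). -/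
def Controlled (Λ : Set V) : Set (Node V) :=
  Set.range Sum.inl ∪ (fun v => Sum.inr (Sum.inl v)) '' Λ

/-- After controlling `Λ ∪ {layer-3 vertices}` (deleting edges into controlled nodes),
every layer-3 vertex has out-degree at most 1 if and only if `Λ` is a vertex cover
of `G`. -/
theorem stmt10 [Fintype V] [DecidableEq V] (G : V → V → Prop) [DecidableRel G]
    (hsym : ∀ a b, G a b → G b a) (Λ : Set V) :
    (∀ e : Sym2 V, IsEdge G e →
        ({b : Node V | D G (Sum.inl e) b ∧ b ∉ Controlled Λ}).ncard ≤ 1) ↔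
      (∀ i j, G i j → i ∈ Λ ∨ j ∈ Λ) := by
  constructor
  · intro h i j hij
    by_contra hc
    push_neg at hc
    obtain ⟨hi, hj⟩ := hc
    have he : IsEdge G s(i, j) := ⟨i, j, hij, rfl⟩
    have hle := h s(i, j) he
    have h2 : (1 : ℕ) < ({b : Node V | D G (Sum.inl s(i, j)) b ∧
        b ∉ Controlled Λ}).ncard := by
      rw [Set.one_lt_ncard (Set.toFinite _)]
      by_cases hij' : i = j
      · subst hij'
        refine ⟨Sum.inr (Sum.inl i), ?_, Sum.inr (Sum.inr i), ?_, by simp⟩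
        · exact ⟨⟨he, by simp⟩, by simp [Controlled, hi]⟩
        · exact ⟨⟨he, rfl⟩, by simp [Controlled]⟩
      · refine ⟨Sum.inr (Sum.inl i), ?_, Sum.inr (Sum.inl j), ?_, by simp [hij']⟩
        · exact ⟨⟨he, by simp⟩, by simp [Controlled, hi]⟩
        · exact ⟨⟨he, by simp⟩, by simp [Controlled, hj]⟩
    omega
  · intro hcov e he
    obtain ⟨i, j, hij, rfl⟩ := he
    by_cases hij' : i = j
    · subst hij'
      have hi : i ∈ Λ := by rcases hcov i i hij with h | h <;> exact h
      have hsub : {b : Node V | D G (Sum.inl s(i, i)) b ∧ b ∉ Controlled Λ} ⊆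
          {Sum.inr (Sum.inr i)} := by
        rintro (e' | v | v) ⟨hd, hnc⟩
        · exact absurd (Or.inl ⟨e', rfl⟩) hnc
        · obtain ⟨_, hv⟩ := hd
          rw [Sym2.mem_iff] at hv
          have : v = i := by tauto
          subst this
          exact absurd (Or.inr ⟨v, hi, rfl⟩) hnc
        · obtain ⟨_, hv⟩ := hd
          rw [Sym2.eq_iff] at hv
          have : v = i := by tauto
          simp [this]
      calc _ ≤ ({Sum.inr (Sum.inr i)} : Set (Node V)).ncard :=
            Set.ncard_le_ncard hsub (Set.finite_singleton _)
        _ = 1 := Set.ncard_singleton _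
    · rcases hcov i j hij with hmem | hmem
      · have hsub : {b : Node V | D G (Sum.inl s(i, j)) b ∧ b ∉ Controlled Λ} ⊆
            {Sum.inr (Sum.inl j)} := by
          rintro (e' | v | v) ⟨hd, hnc⟩
          · exact absurd (Or.inl ⟨e', rfl⟩) hnc
          · obtain ⟨_, hv⟩ := hd
            rw [Sym2.mem_iff] at hv
            rcases hv with rfl | rfl
            · exact absurd (Or.inr ⟨v, hmem, rfl⟩) hnc
            · simp
          · obtain ⟨_, hv⟩ := hd
            rw [Sym2.eq_iff] at hv
            rcases hv with ⟨rfl, rfl⟩ | ⟨rfl, rfl⟩ <;> exact absurd rfl hij'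
        calc _ ≤ ({Sum.inr (Sum.inl j)} : Set (Node V)).ncard :=
              Set.ncard_le_ncard hsub (Set.finite_singleton _)
          _ = 1 := Set.ncard_singleton _
      · have hsub : {b : Node V | D G (Sum.inl s(i, j)) b ∧ b ∉ Controlled Λ} ⊆
            {Sum.inr (Sum.inl i)} := by
          rintro (e' | v | v) ⟨hd, hnc⟩
          · exact absurd (Or.inl ⟨e', rfl⟩) hnc
          · obtain ⟨_, hv⟩ := hd
            rw [Sym2.mem_iff] at hv
            rcases hv with rfl | rfl
            · simp
            · exact absurd (Or.inr ⟨v, hmem, rfl⟩) hnc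
          · obtain ⟨_, hv⟩ := hd
            rw [Sym2.eq_iff] at hv
            rcases hv with ⟨rfl, rfl⟩ | ⟨rfl, rfl⟩ <;> exact absurd rfl hij'
        calc _ ≤ ({Sum.inr (Sum.inl i)} : Set (Node V)).ncard :=
              Set.ncard_le_ncard hsub (Set.finite_singleton _)
          _ = 1 := Set.ncard_singleton _

end Stmt10
end

section
/- Let P be the transition matrix of a finite Markov chain and let x* be a state. Suppose there exists T such that for all t > T and all initial states x_0, the t-step transition probability from x_0 to x* is strictly positive (stability in probability at x*). Then x* is an aperiodic recurrent state, and the limit lim_{t→∞} P^t(x*, x_0) exists, is strictly positive, and is the same for every initial state x_0. -/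
namespace Stmt14

variable {S : Type*} [Fintype S] [DecidableEq S]

/-- Transition matrix with all transitions *into* the taboo state `x` removed
(convention: `P j i` is the one-step probability of moving from `i` to `j`). -/
def taboo (P : Matrix S S ℝ) (x : S) : Matrix S S ℝ := fun j i => if j = x then 0 else P j i

/-- Probability that, starting from `y`, the chain arrives at `x` for the first time at
time `k + 1`. -/
def firstArrival (P : Matrix S S ℝ) (x y : S) (k : ℕ) : ℝ :=
  ∑ j, P x j * ((taboo P x) ^ k) j y

/-- Probability, starting from `y`, of ever reaching `x` (at some time `≥ 1`). -/
noncomputable def hitProb (P : Matrix S S ℝ) (x y : S) : ℝ := ∑' k, firstArrival P x y k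

/-- A state is recurrent if the probability of ever returning to it equals 1. -/
def Recurrent (P : Matrix S S ℝ) (x : S) : Prop := hitProb P x x = 1

/-- A state is aperiodic if the gcd of its return times is 1, i.e. the only common
divisor of `{t ≥ 1 : P^t(x,x) > 0}` is 1. -/
def Aperiodic (P : Matrix S S ℝ) (x : S) : Prop :=
  ∀ d : ℕ, (∀ t, 1 ≤ t → 0 < (P ^ t) x x → d ∣ t) → d = 1

open Filter Finset

lemma entry_nonneg_pow (P : Matrix S S ℝ) (h : ∀ j i, 0 ≤ P j i) :
    ∀ t j i, 0 ≤ (P ^ t) j i := by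
  intro t
  induction t with
  | zero =>
    intro j i
    simp only [pow_zero, Matrix.one_apply]
    split_ifs <;> norm_num
  | succ n ih =>
    intro j i
    rw [pow_succ, Matrix.mul_apply]
    exact Finset.sum_nonneg fun k _ => mul_nonneg (ih j k) (h k i)

lemma entry_le_pow (A B : Matrix S S ℝ) (hA : ∀ j i, 0 ≤ A j i)
    (hAB : ∀ j i, A j i ≤ B j i) :
    ∀ t j i, (A ^ t) j i ≤ (B ^ t) j i := by
  intro t
  induction t with
  | zero => intro j i; simp
  | succ n ih =>
    intro j i
    rw [pow_succ, pow_succ, Matrix.mul_apply, Matrix.mul_apply]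
    refine Finset.sum_le_sum fun k _ => ?_
    exact mul_le_mul (ih j k) (hAB k i) (hA k i)
      (le_trans (entry_nonneg_pow A hA n j k) (ih j k))

lemma colsum_pow (P : Matrix S S ℝ) (hst : ∀ i, ∑ j, P j i = 1) :
    ∀ t i, ∑ j, (P ^ t) j i = 1 := by
  intro t
  induction t with
  | zero =>
    intro i
    simp [Matrix.one_apply]
  | succ n ih =>
    intro i
    have h1 : ∀ j, (P ^ (n+1)) j i = ∑ k, P j k * (P ^ n) k i := by
      intro j; rw [pow_succ', Matrix.mul_apply]
    simp_rw [h1]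
    rw [Finset.sum_comm]
    have h2 : ∀ k, ∑ j, P j k * (P ^ n) k i = (P ^ n) k i := by
      intro k; rw [← Finset.sum_mul, hst k, one_mul]
    simp_rw [h2, ih i]

noncomputable def mlo [Nonempty S] (P : Matrix S S ℝ) (x : S) (t : ℕ) : ℝ :=
  Finset.univ.inf' Finset.univ_nonempty fun i => (P ^ t) x i

noncomputable def Mhi [Nonempty S] (P : Matrix S S ℝ) (x : S) (t : ℕ) : ℝ :=
  Finset.univ.sup' Finset.univ_nonempty fun i => (P ^ t) x i

lemma step [Nonempty S] (P : Matrix S S ℝ) (hnn : ∀ j i, 0 ≤ P j i)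
    (hst : ∀ i, ∑ j, P j i = 1) (x : S) (t0 : ℕ) (ε : ℝ)
    (hε : ∀ i, ε ≤ (P ^ t0) x i) (t : ℕ) (i : S) :
    ε * (P ^ t) x x + (1 - ε) * mlo P x t ≤ (P ^ (t + t0)) x i ∧
      (P ^ (t + t0)) x i ≤ ε * (P ^ t) x x + (1 - ε) * Mhi P x t := by
  have hnnpow := entry_nonneg_pow P hnn
  set g : S → ℝ := fun j => (P ^ t) x j with hg
  set c : S → ℝ := fun j => (P ^ t0) j i - (if j = x then ε else 0) with hc
  have hcnn : ∀ j, 0 ≤ c j := by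
    intro j; simp only [hc]; split_ifs with h
    · subst h; linarith [hε i]
    · simpa using hnnpow t0 j i
  have hcsum : ∑ j, c j = 1 - ε := by
    simp only [hc]
    rw [Finset.sum_sub_distrib, colsum_pow P hst t0 i]
    simp
  have h2 : ∑ j, g j * c j = (P ^ (t + t0)) x i - ε * g x := by
    have hpp : (P ^ (t + t0)) x i = ∑ j, g j * (P ^ t0) j i := by
      rw [pow_add, Matrix.mul_apply]
    rw [hpp]
    simp only [hc, mul_sub]
    rw [Finset.sum_sub_distrib]
    have h3 : ∑ j, g j * (if j = x then ε else 0) = ε * g x := by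
      simp [mul_ite, mul_comm]
    rw [h3]
  have hub : ∑ j, g j * c j ≤ (1 - ε) * Mhi P x t := by
    calc ∑ j, g j * c j ≤ ∑ j, Mhi P x t * c j :=
        Finset.sum_le_sum fun j _ =>
          mul_le_mul_of_nonneg_right (Finset.le_sup' _ (Finset.mem_univ j)) (hcnn j)
      _ = (1 - ε) * Mhi P x t := by rw [← Finset.mul_sum, hcsum]; ring
  have hlb : (1 - ε) * mlo P x t ≤ ∑ j, g j * c j := by
    calc (1 - ε) * mlo P x t = ∑ j, mlo P x t * c j := by
          rw [← Finset.mul_sum, hcsum]; ring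
      _ ≤ ∑ j, g j * c j :=
        Finset.sum_le_sum fun j _ =>
          mul_le_mul_of_nonneg_right (Finset.inf'_le _ (Finset.mem_univ j)) (hcnn j)
  constructor <;> linarith

lemma geom_tendsto (f : ℕ → ℝ) (hf0 : ∀ n, 0 ≤ f n) (hanti : Antitone f)
    (t0 : ℕ) (ht0 : 0 < t0) (r : ℝ) (hr0 : 0 ≤ r) (hr1 : r < 1)
    (hstep : ∀ n, f (n + t0) ≤ r * f n) :
    Tendsto f atTop (nhds 0) := by
  have hk : ∀ k, f (k * t0) ≤ r ^ k * f 0 := by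
    intro k
    induction k with
    | zero => simp
    | succ n ih =>
      have he : (n + 1) * t0 = n * t0 + t0 := by ring
      rw [he]
      calc f (n * t0 + t0) ≤ r * f (n * t0) := hstep _
        _ ≤ r * (r ^ n * f 0) := mul_le_mul_of_nonneg_left ih hr0
        _ = r ^ (n + 1) * f 0 := by ring
  have hbound : ∀ n, f n ≤ r ^ (n / t0) * f 0 := fun n =>
    le_trans (hanti (Nat.div_mul_le_self n t0)) (hk _)
  have htt : Tendsto (fun n : ℕ => n / t0) atTop atTop :=
    Filter.tendsto_atTop_atTop.2 fun b =>
      ⟨b * t0, fun n hn => (Nat.le_div_iff_mul_le ht0).2 hn⟩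
  have hlim : Tendsto (fun n => r ^ (n / t0) * f 0) atTop (nhds 0) := by
    have := ((tendsto_pow_atTop_nhds_zero_of_lt_one hr0 hr1).comp htt).mul_const (f 0)
    simpa using this
  exact squeeze_zero hf0 hbound hlim

lemma taboo_nonneg (P : Matrix S S ℝ) (hnn : ∀ j i, 0 ≤ P j i) (x : S) :
    ∀ j i, 0 ≤ taboo P x j i := by
  intro j i; unfold taboo; split_ifs <;> [norm_num; exact hnn j i]

lemma taboo_le (P : Matrix S S ℝ) (hnn : ∀ j i, 0 ≤ P j i) (x : S) :
    ∀ j i, taboo P x j i ≤ P j i := by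
  intro j i; unfold taboo; split_ifs <;> [exact hnn j i; exact le_rfl]

lemma taboo_pow_x (P : Matrix S S ℝ) (x : S) (n : ℕ) (i : S) :
    (taboo P x ^ (n + 1)) x i = 0 := by
  rw [pow_succ', Matrix.mul_apply]
  apply Finset.sum_eq_zero
  intro k _
  have : taboo P x x k = 0 := if_pos rfl
  rw [this, zero_mul]

lemma taboo_colsum (P : Matrix S S ℝ) (hst : ∀ i, ∑ j, P j i = 1) (x k : S) :
    ∑ j, taboo P x j k = 1 - P x k := by
  have h1 : ∀ j, taboo P x j k = P j k - (if j = x then P x k else 0) := by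
    intro j; unfold taboo; split_ifs with h
    · subst h; ring
    · ring
  simp_rw [h1]
  rw [Finset.sum_sub_distrib, hst k]
  simp

lemma Fsucc (P : Matrix S S ℝ) (hst : ∀ i, ∑ j, P j i = 1) (x y : S) (n : ℕ) :
    ∑ j, (taboo P x ^ (n + 1)) j y
      = (∑ j, (taboo P x ^ n) j y) - firstArrival P x y n := by
  have h1 : ∀ j, (taboo P x ^ (n + 1)) j y = ∑ k, taboo P x j k * (taboo P x ^ n) k y := by
    intro j; rw [pow_succ', Matrix.mul_apply]
  simp_rw [h1]
  rw [Finset.sum_comm]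
  have h2 : ∀ k, ∑ j, taboo P x j k * (taboo P x ^ n) k y
      = (1 - P x k) * (taboo P x ^ n) k y := by
    intro k; rw [← Finset.sum_mul, taboo_colsum P hst]
  simp_rw [h2, sub_mul, one_mul]
  rw [Finset.sum_sub_distrib]
  rfl

lemma partial_sum_firstArrival (P : Matrix S S ℝ) (hst : ∀ i, ∑ j, P j i = 1) (x y : S) :
    ∀ n, ∑ k ∈ Finset.range n, firstArrival P x y k
      = 1 - ∑ j, (taboo P x ^ n) j y := by
  intro n
  induction n with
  | zero => simp [Matrix.one_apply]
  | succ n ih =>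
    rw [Finset.sum_range_succ, ih, Fsucc P hst]
    ring

/-- If a finite Markov chain is stable in probability at `x*` (for all large `t` the
`t`-step probability of being at `x*` is positive from every initial state), then `x*`
is aperiodic and recurrent, and `lim_{t→∞} P^t(x*, x₀)` exists, is strictly positive,
and is the same for every initial state `x₀`. -/
theorem stmt14 (P : Matrix S S ℝ)
    (hnonneg : ∀ j i, 0 ≤ P j i) (hstoch : ∀ i, ∑ j, P j i = 1)
    (xstar : S)
    (hSP : ∃ T : ℕ, ∀ t, T < t → ∀ x₀, 0 < (P ^ t) xstar x₀) :
    Aperiodic P xstar ∧ Recurrent P xstar ∧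
      ∃ c : ℝ, 0 < c ∧ ∀ x₀, Filter.Tendsto (fun t => (P ^ t) xstar x₀)
        Filter.atTop (nhds c) := by
  obtain ⟨T, hT⟩ := hSP
  have : Nonempty S := ⟨xstar⟩
  have hnnpow := entry_nonneg_pow P hnonneg
  -- Aperiodicity
  have hap : Aperiodic P xstar := by
    intro d hd
    have h1 : d ∣ T + 1 := hd (T + 1) (by omega) (hT (T + 1) (by omega) xstar)
    have h2 : d ∣ T + 2 := hd (T + 2) (by omega) (hT (T + 2) (by omega) xstar)
    have h3 : d ∣ 1 := by
      have := Nat.dvd_sub h2 h1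
      simpa using this
    exact Nat.dvd_one.mp h3
  -- the Doeblin minorization constant
  set ε : ℝ := mlo P xstar (T + 1) with hεdef
  have hεpos : 0 < ε := by
    rw [hεdef, mlo, Finset.lt_inf'_iff]
    intro i _
    exact hT (T + 1) (by omega) i
  have hε : ∀ i, ε ≤ (P ^ (T + 1)) xstar i := fun i => Finset.inf'_le _ (Finset.mem_univ i)
  have hε1 : ε ≤ 1 := by
    have h1 := hε xstar
    have h2 := colsum_pow P hstoch (T + 1) xstar
    have h3 := Finset.single_le_sum
      (f := fun j => (P ^ (T + 1)) j xstar) (fun j _ => hnnpow (T + 1) j xstar)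
      (Finset.mem_univ xstar)
    linarith
  -- monotonicity of extremes
  have hMdec : ∀ t s, Mhi P xstar (t + s) ≤ Mhi P xstar t := by
    intro t s
    apply Finset.sup'_le
    intro i _
    have h := (step P hnonneg hstoch xstar s 0 (fun i => hnnpow s xstar i) t i).2
    linarith
  have hminc : ∀ t s, mlo P xstar t ≤ mlo P xstar (t + s) := by
    intro t s
    apply Finset.le_inf'
    intro i _
    have h := (step P hnonneg hstoch xstar s 0 (fun i => hnnpow s xstar i) t i).1
    linarith
  have hle : ∀ t, mlo P xstar t ≤ Mhi P xstar t := fun t =>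
    le_trans (Finset.inf'_le _ (Finset.mem_univ xstar))
      (Finset.le_sup' _ (Finset.mem_univ xstar))
  -- oscillation
  have hdanti : Antitone (fun t => Mhi P xstar t - mlo P xstar t) := by
    intro a b hab
    have hb : a + (b - a) = b := by omega
    have h1 := hMdec a (b - a)
    have h2 := hminc a (b - a)
    rw [hb] at h1 h2
    show Mhi P xstar b - mlo P xstar b ≤ Mhi P xstar a - mlo P xstar a
    linarith
  have hdnn : ∀ t, 0 ≤ Mhi P xstar t - mlo P xstar t := fun t => sub_nonneg.2 (hle t)
  have hdstep : ∀ t, Mhi P xstar (t + (T + 1)) - mlo P xstar (t + (T + 1))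
      ≤ (1 - ε) * (Mhi P xstar t - mlo P xstar t) := by
    intro t
    have hub : Mhi P xstar (t + (T + 1))
        ≤ ε * (P ^ t) xstar xstar + (1 - ε) * Mhi P xstar t :=
      Finset.sup'_le _ _ fun i _ => (step P hnonneg hstoch xstar (T + 1) ε hε t i).2
    have hlb : ε * (P ^ t) xstar xstar + (1 - ε) * mlo P xstar t
        ≤ mlo P xstar (t + (T + 1)) :=
      Finset.le_inf' _ _ fun i _ => (step P hnonneg hstoch xstar (T + 1) ε hε t i).1
    linarith
  have hdlim : Tendsto (fun t => Mhi P xstar t - mlo P xstar t) atTop (nhds 0) :=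
    geom_tendsto _ hdnn hdanti (T + 1) (by omega) (1 - ε) (by linarith) (by linarith) hdstep
  -- convergence of the extremes to a common limit
  have hmono : Monotone (mlo P xstar) := by
    intro a b hab
    have h := hminc a (b - a)
    rwa [Nat.add_sub_cancel' hab] at h
  have hbdd : BddAbove (Set.range (mlo P xstar)) := by
    refine ⟨Mhi P xstar 0, ?_⟩
    rintro _ ⟨t, rfl⟩
    have h := hMdec 0 t
    simp only [Nat.zero_add] at h
    exact le_trans (hle t) h
  have hmlim : Tendsto (mlo P xstar) atTop (nhds (⨆ t, mlo P xstar t)) :=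
    tendsto_atTop_ciSup hmono hbdd
  have hMlim : Tendsto (Mhi P xstar) atTop (nhds (⨆ t, mlo P xstar t)) := by
    have h := hmlim.add hdlim
    simp only [add_zero] at h
    exact h.congr fun t => by ring
  have hcpos : 0 < ⨆ t, mlo P xstar t :=
    lt_of_lt_of_le hεpos (le_ciSup hbdd (T + 1))
  have hconv : ∀ x₀, Tendsto (fun t => (P ^ t) xstar x₀) atTop
      (nhds (⨆ t, mlo P xstar t)) := by
    intro x₀
    refine tendsto_of_tendsto_of_tendsto_of_le_of_le hmlim hMlim
      (fun t => Finset.inf'_le _ (Finset.mem_univ x₀))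
      (fun t => Finset.le_sup' _ (Finset.mem_univ x₀))
  -- recurrence
  have htnn := taboo_nonneg P hnonneg xstar
  have htpow := entry_nonneg_pow (taboo P xstar) htnn
  have hfa_nn : ∀ n, 0 ≤ firstArrival P xstar xstar n := fun n =>
    Finset.sum_nonneg fun j _ => mul_nonneg (hnonneg xstar j) (htpow n j xstar)
  have hFnn : ∀ n, 0 ≤ ∑ j, (taboo P xstar ^ n) j xstar := fun n =>
    Finset.sum_nonneg fun j _ => htpow n j xstar
  have htle := entry_le_pow (taboo P xstar) P htnn (taboo_le P hnonneg xstar)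
  have hcolb : ∀ i, ∑ j, (taboo P xstar ^ (T + 1)) j i ≤ 1 - ε := by
    intro i
    have h0 : (taboo P xstar ^ (T + 1)) xstar i = 0 := taboo_pow_x P xstar T i
    have hsplit : ∑ j, (taboo P xstar ^ (T + 1)) j i
        = ∑ j ∈ Finset.univ.erase xstar, (taboo P xstar ^ (T + 1)) j i := by
      rw [← Finset.add_sum_erase _ _ (Finset.mem_univ xstar), h0, zero_add]
    have hP : ∑ j ∈ Finset.univ.erase xstar, (P ^ (T + 1)) j i
        = 1 - (P ^ (T + 1)) xstar i := by
      have h := Finset.add_sum_erase Finset.univ (fun j => (P ^ (T + 1)) j i)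
        (Finset.mem_univ xstar)
      rw [colsum_pow P hstoch (T + 1) i] at h
      linarith
    rw [hsplit]
    calc ∑ j ∈ Finset.univ.erase xstar, (taboo P xstar ^ (T + 1)) j i
        ≤ ∑ j ∈ Finset.univ.erase xstar, (P ^ (T + 1)) j i :=
          Finset.sum_le_sum fun j _ => htle (T + 1) j i
      _ = 1 - (P ^ (T + 1)) xstar i := hP
      _ ≤ 1 - ε := by linarith [hε i]
  have hFstep : ∀ n, ∑ j, (taboo P xstar ^ (n + (T + 1))) j xstar
      ≤ (1 - ε) * ∑ j, (taboo P xstar ^ n) j xstar := by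
    intro n
    have hkey : ∑ j, (taboo P xstar ^ (n + (T + 1))) j xstar
        = ∑ i, (∑ j, (taboo P xstar ^ (T + 1)) j i) * (taboo P xstar ^ n) i xstar := by
      have h1 : ∀ j, (taboo P xstar ^ (n + (T + 1))) j xstar
          = ∑ i, (taboo P xstar ^ (T + 1)) j i * (taboo P xstar ^ n) i xstar := by
        intro j
        rw [show n + (T + 1) = (T + 1) + n by ring, pow_add, Matrix.mul_apply]
      simp_rw [h1]
      rw [Finset.sum_comm]
      simp_rw [Finset.sum_mul]
    rw [hkey]
    calc ∑ i, (∑ j, (taboo P xstar ^ (T + 1)) j i) * (taboo P xstar ^ n) i xstar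
        ≤ ∑ i, (1 - ε) * (taboo P xstar ^ n) i xstar :=
          Finset.sum_le_sum fun i _ =>
            mul_le_mul_of_nonneg_right (hcolb i) (htpow n i xstar)
      _ = (1 - ε) * ∑ j, (taboo P xstar ^ n) j xstar := by rw [← Finset.mul_sum]
  have hFanti : Antitone (fun n => ∑ j, (taboo P xstar ^ n) j xstar) := by
    apply antitone_nat_of_succ_le
    intro n
    have h := Fsucc P hstoch xstar xstar n
    show ∑ j, (taboo P xstar ^ (n + 1)) j xstar ≤ ∑ j, (taboo P xstar ^ n) j xstar
    rw [h]
    linarith [hfa_nn n]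
  have hFlim : Tendsto (fun n => ∑ j, (taboo P xstar ^ n) j xstar) atTop (nhds 0) :=
    geom_tendsto _ hFnn hFanti (T + 1) (by omega) (1 - ε) (by linarith) (by linarith) hFstep
  have hps : Tendsto (fun n => ∑ k ∈ Finset.range n, firstArrival P xstar xstar k)
      atTop (nhds 1) := by
    have heq : (fun n => ∑ k ∈ Finset.range n, firstArrival P xstar xstar k)
        = fun n => 1 - ∑ j, (taboo P xstar ^ n) j xstar := by
      funext n; exact partial_sum_firstArrival P hstoch xstar xstar n
    rw [heq]
    simpa using (tendsto_const_nhds.sub hFlim)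
  have hhs : HasSum (firstArrival P xstar xstar) 1 :=
    (hasSum_iff_tendsto_nat_of_nonneg hfa_nn 1).2 hps
  exact ⟨hap, hhs.tsum_eq, ⟨⨆ t, mlo P xstar t, hcpos, hconv⟩⟩

end Stmt14
end

section
/- Let P be a column-stochastic matrix of block upper-triangular form P = [[P_1, P_2], [0, P_3]], where P_1 is s × s column-stochastic, and suppose P_1^t → 1_s^T ⊗ ω for a probability vector ω and P_3^t → 0 as t → ∞. Then P_2-block of P^t converges to 1^T ⊗ ω as well, and hence P^t → 1^T ⊗ (ω, 0)^T, the rank-one matrix with all columns equal to the vector ω extended by zeros. -/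
/-!
Write `Q = [[A, B], [0, D]]` and `B_t` for the `(1,2)`-block of `Q^t`, so that
`B_{k+h} = A^k B_h + B_k D^h`. Column-stochasticity of `Q^t` bounds the entries of `B_t` by `1`
and gives that the columns of `B_h` sum to `1 - 1ᵀ D^h → 1`, hence `L B_h → L` for
`L = 1ᵀ ⊗ ω`. Letting `k` and `h` tend to infinity independently in
`B_{k+h} = (A^k - L) B_h + L B_h + B_k D^h`, the first and last terms vanish because `B` is
bounded, so `B_t → L`.
-/

open Filter Matrix Topology

theorem Filter.tendsto_of_tendsto_add_prod_atTop {α : Type*} {g : ℕ → α} {l : Filter α}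
    (h : Tendsto (fun p : ℕ × ℕ => g (p.1 + p.2)) (atTop ×ˢ atTop) l) : Tendsto g atTop l := by
  have hhalf := Nat.tendsto_div_const_atTop (two_ne_zero (α := ℕ))
  have halves : Tendsto (fun t => (t / 2, t - t / 2)) atTop (atTop ×ˢ atTop) :=
    hhalf.prodMk (tendsto_atTop_mono (fun t => by omega) hhalf)
  exact (h.comp halves).congr fun t => by simp only [Function.comp_apply]; congr 1; omega

namespace Matrix

section BoundedMul

variable {ι l m n : Type*} [Fintype m] {F : Filter ι}

theorem tendsto_zero_mul_of_abs_le {X : ι → Matrix l m ℝ} {Y : ι → Matrix m n ℝ} {C : ℝ}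
    (hX : Tendsto X F (𝓝 0)) (hY : ∀ i a b, |Y i a b| ≤ C) :
    Tendsto (fun i => X i * Y i) F (𝓝 0) := by
  refine tendsto_pi_nhds.2 fun a => tendsto_pi_nhds.2 fun b => ?_
  have hterm (c : m) : Tendsto (fun i => X i a c * Y i c b) F (𝓝 0) :=
    ((hX.apply_nhds a).apply_nhds c).zero_mul_isBoundedUnder_le
      ⟨C, eventually_map.2 (.of_forall fun i => hY i c b)⟩
  simpa [mul_apply] using tendsto_finsetSum Finset.univ fun c _ => hterm c

theorem tendsto_mul_zero_of_abs_le {X : ι → Matrix l m ℝ} {Y : ι → Matrix m n ℝ} {C : ℝ}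
    (hX : ∀ i a b, |X i a b| ≤ C) (hY : Tendsto Y F (𝓝 0)) :
    Tendsto (fun i => X i * Y i) F (𝓝 0) := by
  refine tendsto_pi_nhds.2 fun a => tendsto_pi_nhds.2 fun b => ?_
  have hterm (c : m) : Tendsto (fun i => X i a c * Y i c b) F (𝓝 0) :=
    isBoundedUnder_le_mul_tendsto_zero ⟨C, eventually_map.2 (.of_forall fun i => hX i a c)⟩
      ((hY.apply_nhds c).apply_nhds b)
  simpa [mul_apply] using tendsto_finsetSum Finset.univ fun c _ => hterm c
end BoundedMul

section BlockTriangular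

variable {α m n : Type*} [Fintype m] [Fintype n] [DecidableEq m] [DecidableEq n]

theorem fromBlocks_zero₂₁_pow [Semiring α] (A : Matrix m m α) (B : Matrix m n α)
    (D : Matrix n n α) (t : ℕ) :
    fromBlocks A B 0 D ^ t =
      fromBlocks (A ^ t) (fromBlocks A B 0 D ^ t).toBlocks₁₂ 0 (D ^ t) := by
  induction t with
  | zero => simp [← fromBlocks_one]
  | succ t ih =>
    rw [pow_succ, ih, fromBlocks_multiply]
    simp [pow_succ]

theorem toBlocks₁₂_fromBlocks_zero₂₁_pow_add [Semiring α] (A : Matrix m m α) (B : Matrix m n α)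
    (D : Matrix n n α) (k h : ℕ) :
    (fromBlocks A B 0 D ^ (k + h)).toBlocks₁₂ =
      A ^ k * (fromBlocks A B 0 D ^ h).toBlocks₁₂ + (fromBlocks A B 0 D ^ k).toBlocks₁₂ * D ^ h := by
  rw [pow_add, fromBlocks_zero₂₁_pow A B D k, fromBlocks_zero₂₁_pow A B D h, fromBlocks_multiply]
  simp

variable {A : Matrix m m ℝ} {B : Matrix m n ℝ} {D : Matrix n n ℝ}

theorem tendsto_toBlocks₁₂_fromBlocks_zero₂₁_pow {L : Matrix m m ℝ} {M : Matrix m n ℝ} {C : ℝ}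
    (hA : Tendsto (A ^ ·) atTop (𝓝 L)) (hD : Tendsto (D ^ ·) atTop (𝓝 0))
    (hbdd : ∀ t i j, |(fromBlocks A B 0 D ^ t).toBlocks₁₂ i j| ≤ C)
    (hL : Tendsto (fun t => L * (fromBlocks A B 0 D ^ t).toBlocks₁₂) atTop (𝓝 M)) :
    Tendsto (fun t => (fromBlocks A B 0 D ^ t).toBlocks₁₂) atTop (𝓝 M) := by
  set E := fun t => (fromBlocks A B 0 D ^ t).toBlocks₁₂
  refine tendsto_of_tendsto_add_prod_atTop ?_
  have hsplit (p : ℕ × ℕ) :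
      E (p.1 + p.2) = (A ^ p.1 - L) * E p.2 + L * E p.2 + E p.1 * D ^ p.2 := by
    simp only [E, toBlocks₁₂_fromBlocks_zero₂₁_pow_add]
    rw [Matrix.sub_mul, sub_add_cancel]
  have hfst : Tendsto (fun p : ℕ × ℕ => (A ^ p.1 - L) * E p.2) (atTop ×ˢ atTop) (𝓝 0) :=
    tendsto_zero_mul_of_abs_le (by simpa using (hA.comp tendsto_fst).sub_const L)
      fun p => hbdd p.2
  have hsnd : Tendsto (fun p : ℕ × ℕ => E p.1 * D ^ p.2) (atTop ×ˢ atTop) (𝓝 0) :=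
    tendsto_mul_zero_of_abs_le (fun p => hbdd p.1) (hD.comp tendsto_snd)
  simpa [hsplit] using (hfst.add (hL.comp tendsto_snd)).add hsnd

end BlockTriangular

section ColStochastic

variable {m n : Type*} [Fintype m] [Fintype n] [DecidableEq m] [DecidableEq n]
  {A : Matrix m m ℝ} {B : Matrix m n ℝ} {D : Matrix n n ℝ}

theorem abs_toBlocks₁₂_pow_apply_le_one (hQ : fromBlocks A B 0 D ∈ colStochastic ℝ (m ⊕ n))
    (t : ℕ) (i : m) (j : n) : |(fromBlocks A B 0 D ^ t).toBlocks₁₂ i j| ≤ 1 := by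
  have hQt := pow_mem hQ t
  exact abs_le.2 ⟨(neg_nonpos.2 zero_le_one).trans (nonneg_of_mem_colStochastic hQt),
    le_one_of_mem_colStochastic hQt⟩

theorem sum_toBlocks₁₂_pow_apply (hQ : fromBlocks A B 0 D ∈ colStochastic ℝ (m ⊕ n))
    (t : ℕ) (j : n) :
    ∑ i, (fromBlocks A B 0 D ^ t).toBlocks₁₂ i j = 1 - ∑ i, (D ^ t) i j := by
  have hcol := sum_col_of_mem_colStochastic (pow_mem hQ t) (Sum.inr j)
  rw [Fintype.sum_sum_type, fromBlocks_zero₂₁_pow] at hcol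
  simp only [fromBlocks_apply₁₂, fromBlocks_apply₂₂] at hcol
  linarith

theorem tendsto_toBlocks₁₂_pow_of_mem_colStochastic
    (hQ : fromBlocks A B 0 D ∈ colStochastic ℝ (m ⊕ n)) {ω : m → ℝ}
    (hA : Tendsto (A ^ ·) atTop (𝓝 (of fun i _ => ω i))) (hD : Tendsto (D ^ ·) atTop (𝓝 0)) :
    Tendsto (fun t => (fromBlocks A B 0 D ^ t).toBlocks₁₂) atTop (𝓝 (of fun i _ => ω i)) := by
  refine tendsto_toBlocks₁₂_fromBlocks_zero₂₁_pow hA hD (abs_toBlocks₁₂_pow_apply_le_one hQ) ?_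
  refine tendsto_pi_nhds.2 fun i => tendsto_pi_nhds.2 fun j => ?_
  have hD_col : Tendsto (fun t => ∑ k, (D ^ t) k j) atTop (𝓝 0) := by
    simpa using tendsto_finsetSum Finset.univ fun k _ => (hD.apply_nhds k).apply_nhds j
  simpa [mul_apply, ← Finset.mul_sum, sum_toBlocks₁₂_pow_apply hQ] using
    ((tendsto_const_nhds (x := (1 : ℝ))).sub hD_col).const_mul (ω i)

theorem tendsto_pow_of_mem_colStochastic
    (hQ : fromBlocks A B 0 D ∈ colStochastic ℝ (m ⊕ n)) {ω : m → ℝ}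
    (hA : Tendsto (A ^ ·) atTop (𝓝 (of fun i _ => ω i))) (hD : Tendsto (D ^ ·) atTop (𝓝 0)) :
    Tendsto (fun t => fromBlocks A B 0 D ^ t) atTop
      (𝓝 (of fun p _ => Sum.elim ω (fun _ => 0) p)) := by
  have hlim : (of fun p _ => Sum.elim ω (fun _ => 0) p : Matrix (m ⊕ n) (m ⊕ n) ℝ) =
      fromBlocks (of fun i _ => ω i) (of fun i _ => ω i) 0 0 := by
    ext (i | i) (j | j) <;> rfl
  have hcont : Continuous fun X : Matrix m m ℝ × Matrix m n ℝ × Matrix n n ℝ =>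
      fromBlocks X.1 X.2.1 0 X.2.2 := by fun_prop
  rw [hlim]
  refine ((hcont.tendsto _).comp (hA.prodMk_nhds
    ((tendsto_toBlocks₁₂_pow_of_mem_colStochastic hQ hA hD).prodMk_nhds hD))).congr fun t => ?_
  exact (fromBlocks_zero₂₁_pow A B D t).symm

end ColStochastic

end Matrix

theorem stmt18_general {n₁ n₂ : Type*} [Fintype n₁] [Fintype n₂] [DecidableEq n₁] [DecidableEq n₂]
    (P₁ : Matrix n₁ n₁ ℝ) (P₂ : Matrix n₁ n₂ ℝ) (P₃ : Matrix n₂ n₂ ℝ)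
    (P : Matrix (n₁ ⊕ n₂) (n₁ ⊕ n₂) ℝ)
    (hP : P = Matrix.fromBlocks P₁ P₂ 0 P₃)
    (hPnonneg : ∀ p q, 0 ≤ P p q) (hPstoch : ∀ q, ∑ p, P p q = 1)
    (ω : n₁ → ℝ)
    (hP₁lim : Filter.Tendsto (fun t => P₁ ^ t) Filter.atTop
      (nhds (Matrix.of fun i _ => ω i)))
    (hP₃lim : Filter.Tendsto (fun t => P₃ ^ t) Filter.atTop (nhds 0)) :
    Filter.Tendsto (fun t => (P ^ t).toBlocks₁₂) Filter.atTop
        (nhds (Matrix.of fun i _ => ω i)) ∧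
      Filter.Tendsto (fun t => P ^ t) Filter.atTop
        (nhds (Matrix.of fun p _ => Sum.elim ω (fun _ => 0) p)) := by
  subst hP
  have hP : fromBlocks P₁ P₂ 0 P₃ ∈ colStochastic ℝ (n₁ ⊕ n₂) :=
    mem_colStochastic_iff_sum.2 ⟨hPnonneg, hPstoch⟩
  exact ⟨tendsto_toBlocks₁₂_pow_of_mem_colStochastic hP hP₁lim hP₃lim,
    tendsto_pow_of_mem_colStochastic hP hP₁lim hP₃lim⟩

/-- Let `P = [[P₁, P₂], [0, P₃]]` be a block upper-triangular column-stochastic matrix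
with `P₁` column-stochastic, `P₁^t → 1ᵀ ⊗ ω` for a probability vector `ω`, and
`P₃^t → 0`. Then the `(1,2)`-block of `P^t` converges to `1ᵀ ⊗ ω` as well, and hence
`P^t` converges to the rank-one matrix all of whose columns equal `ω` extended by
zeros. -/
theorem stmt18 {n₁ n₂ : Type*} [Fintype n₁] [Fintype n₂] [DecidableEq n₁] [DecidableEq n₂]
    (P₁ : Matrix n₁ n₁ ℝ) (P₂ : Matrix n₁ n₂ ℝ) (P₃ : Matrix n₂ n₂ ℝ)
    (P : Matrix (n₁ ⊕ n₂) (n₁ ⊕ n₂) ℝ)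
    (hP : P = Matrix.fromBlocks P₁ P₂ 0 P₃)
    (hPnonneg : ∀ p q, 0 ≤ P p q) (hPstoch : ∀ q, ∑ p, P p q = 1)
    (hP₁stoch : (∀ j i, 0 ≤ P₁ j i) ∧ ∀ i, ∑ j, P₁ j i = 1)
    (ω : n₁ → ℝ) (hω0 : ∀ j, 0 ≤ ω j) (hω1 : ∑ j, ω j = 1)
    (hP₁lim : Filter.Tendsto (fun t => P₁ ^ t) Filter.atTop
      (nhds (Matrix.of fun i _ => ω i)))
    (hP₃lim : Filter.Tendsto (fun t => P₃ ^ t) Filter.atTop (nhds 0)) :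
    Filter.Tendsto (fun t => (P ^ t).toBlocks₁₂) Filter.atTop
        (nhds (Matrix.of fun i _ => ω i)) ∧
      Filter.Tendsto (fun t => P ^ t) Filter.atTop
        (nhds (Matrix.of fun p _ => Sum.elim ω (fun _ => 0) p)) :=
  stmt18_general P₁ P₂ P₃ P hP hPnonneg hPstoch ω hP₁lim hP₃lim
end

section
/- Let f : {0,1}^n → {0,1}^n be the global transition map of a Boolean network whose dependency digraph is acyclic (node i's update reads only its in-neighbors, and there is no directed cycle among nodes). Then f has a unique fixed point, and every trajectory reaches it in at most l steps, where l is the length of the longest directed path in the dependency digraph. -/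
/-!
After `t` steps, the value at a node `v` no longer depends on the initial state once every
dependency path ending at `v` has fewer than `t` vertices before `v`: by induction on `t`, the
update at `v` reads only in-neighbours `j`, and the paths ending at `j` are one vertex shorter.
Hence `f^[l]` is constant, and a map some iterate of which is constant has that constant as its
unique fixed point.
-/

namespace Function

variable {X : Type*} {f : X → X} {n : ℕ}

theorem isFixedPt_iterate_of_iterate_eq (h : ∀ y z, f^[n] y = f^[n] z) (x : X) :
    IsFixedPt f (f^[n] x) := by
  rw [IsFixedPt, ← iterate_succ_apply' f n x, iterate_succ_apply]
  exact h _ _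

theorem IsFixedPt.eq_iterate_of_iterate_eq {y : X} (hy : IsFixedPt f y)
    (h : ∀ y z, f^[n] y = f^[n] z) (x : X) : y = f^[n] x :=
  (hy.iterate n).symm.trans (h y x)

end Function

section DependencyDigraph

variable {V α : Type*} {E : V → V → Prop} {f : (V → α) → (V → α)}

theorem iterate_apply_eq_of_length_lt
    (hdep : ∀ i : V, ∀ s s' : V → α, (∀ j, E j i → s j = s' j) → f s i = f s' i)
    {t : ℕ} {v : V} (hv : ∀ p : List V, (p ++ [v]).IsChain E → p.length < t)
    (y z : V → α) : f^[t] y v = f^[t] z v := by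
  induction t generalizing v with
  | zero => exact absurd (hv [] (List.isChain_singleton v)) (Nat.lt_irrefl 0)
  | succ t ih =>
    rw [Function.iterate_succ_apply', Function.iterate_succ_apply']
    refine hdep v _ _ fun j hj => ih fun p hp => ?_
    have hpjv : (p ++ [j] ++ [v]).IsChain E := by
      simpa [List.isChain_append_cons_cons] using ⟨hp, hj⟩
    simpa using hv (p ++ [j]) hpjv

theorem iterate_eq_of_length_le
    (hdep : ∀ i : V, ∀ s s' : V → α, (∀ j, E j i → s j = s' j) → f s i = f s' i)
    {l : ℕ} (hl : ∀ p : List V, p.IsChain E → p.length ≤ l) (y z : V → α) :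
    f^[l] y = f^[l] z :=
  funext fun _ => iterate_apply_eq_of_length_lt hdep
    (fun p hp => by simpa using hl _ hp) y z

end DependencyDigraph

theorem stmt19_general {V : Type*}
    (E : V → V → Prop) (f : (V → Bool) → (V → Bool))
    (hdep : ∀ i : V, ∀ s s' : V → Bool, (∀ j, E j i → s j = s' j) → f s i = f s' i)
    (l : ℕ) (hl : ∀ p : List V, p.Chain' E → p.length ≤ l) :
    ∃ x : V → Bool, f x = x ∧ (∀ y, f y = y → y = x) ∧ ∀ y, f^[l] y = x := by
  have hconst := iterate_eq_of_length_le hdep hl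
  exact ⟨f^[l] default, Function.isFixedPt_iterate_of_iterate_eq hconst default,
    fun y hy => Function.IsFixedPt.eq_iterate_of_iterate_eq hy hconst default,
    fun y => hconst y default⟩

/-- Robert's theorem: if the global transition map `f` of a Boolean network has an
acyclic dependency digraph `E` (node `i`'s update reads only its in-neighbors, and
there is no directed cycle), then `f` has a unique fixed point, and every trajectory
reaches it in at most `l` steps, where every directed path of the dependency digraph
has at most `l` vertices. -/
theorem stmt19 {V : Type*} [Fintype V] [DecidableEq V]
    (E : V → V → Prop) (f : (V → Bool) → (V → Bool))
    (hdep : ∀ i : V, ∀ s s' : V → Bool, (∀ j, E j i → s j = s' j) → f s i = f s' i)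
    (hacyclic : ∀ v, ¬ Relation.TransGen E v v)
    (l : ℕ) (hl : ∀ p : List V, p.Chain' E → p.length ≤ l) :
    ∃ x : V → Bool, f x = x ∧ (∀ y, f y = y → y = x) ∧ ∀ y, f^[l] y = x :=
  stmt19_general E f hdep l hl
end
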